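/- (Loday's conjecture.) Let g be a (right) Leibniz algebra over a field k of characteristic zero. For every n ≥ 0, the subspace F_n of the primitive filtration of the tensor algebra T(g) is stable under the total Leibniz differential d = ⊕_m d_m : T(g) → T(g): one has d(F_n) ⊆ F_n. In particular the F_n form an increasing, exhaustive filtration of the Leibniz complex by subcomplexes, with F_0 = k. -/

import Mathlib

open scoped TensorProduct

/-- The pure tensor `x 0 ⊗ x 1 ⊗ ... ⊗ x (n-1)`, viewed inside the tensor algebra
`T(g) = ⊕ₙ g^{⊗n}`. -/
noncomputable def pt (k : Type*) [CommSemiring k] {g : Type*} [AddCommMonoid g] [Module k g]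
    {n : ℕ} (x : Fin n → g) : TensorAlgebra k g :=
  (List.ofFn fun i => TensorAlgebra.ι k (x i)).prod

/-- The degree-`n` component `g^{⊗n}` of the tensor algebra: the span of the pure tensors of
length `n`. -/
noncomputable def tensorGrade (k : Type*) [CommSemiring k] (g : Type*) [AddCommMonoid g]
    [Module k g] (n : ℕ) : Submodule k (TensorAlgebra k g) :=
  Submodule.span k {z | ∃ x : Fin n → g, z = pt k x}

/-! Write `σ` for the grading involution of `T(g)` and `θ_y` for the derivation of `T(g)`
extending `x ↦ x y`. Splitting off the terms of `d` that multiply into the last letter gives the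
recursion `d (a ⊗ y) = d a ⊗ y + θ_y (σ a)`. Derivations preserve every `L_t`, and `σ` acts on
`L_t` by `(-1)^t`; with these, an induction along `X ↦ X ⊗ y - (-1)^t y ⊗ X` shows that every
`Y ∈ L_t` with `t ≥ 2` satisfies `d (X ⊗ Y) = d X ⊗ Y + σ X ⊗ d Y` and `d Y ∈ L_{t-1}`, while for
`t = 1` the recursion applies directly. Since `σ` and the `θ_y` preserve each `F_n` as well, an
induction on `n` gives `d (X ⊗ Y) ∈ F_{n+1}` for `X ∈ F_n`, `Y ∈ L_t`. Exhaustiveness holds because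
`x₁ ⊗ ⋯ ⊗ x_m ∈ F_m`. -/

lemma Fin.snoc_comp_castSucc_succAbove {α : Type*} {m : ℕ} (x : Fin (m + 1) → α) (y : α)
    (j : Fin (m + 1)) :
    (fun a => Fin.snoc (α := fun _ => α) x y (j.castSucc.succAbove a)) =
      Fin.snoc (α := fun _ => α) (fun a => x (j.succAbove a)) y := by
  funext b
  induction b using Fin.lastCases with
  | last =>
    rw [Fin.succAbove_of_le_castSucc _ _ (Fin.castSucc_le_castSucc_iff.mpr (Fin.le_last j)),
      Fin.succ_last]
    simp
  | cast b => simp [Fin.castSucc_succAbove_castSucc]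

namespace TensorAlgebra

variable {k : Type*} [CommRing k] {g : Type*} [AddCommMonoid g] [Module k g]

noncomputable def involute : TensorAlgebra k g →ₐ[k] TensorAlgebra k g :=
  lift k (-ι k)

@[simp]
lemma involute_ι (x : g) : involute (ι k x) = -ι k x := by
  simp [involute]

/-- `a ↦ a + ε d a`, where `d` is the derivation extending `f`: multiplicativity of this map is
the Leibniz rule for `d`. -/
noncomputable def liftDerivDual (f : g →ₗ[k] g) :
    TensorAlgebra k g →ₐ[k] TrivSqZeroExt (TensorAlgebra k g) (TensorAlgebra k g) :=
  lift k <| (TrivSqZeroExt.inlAlgHom k _ _).toLinearMap ∘ₗ ι k +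
    ((TrivSqZeroExt.inrHom _ _).restrictScalars k) ∘ₗ ι k ∘ₗ f

lemma fst_liftDerivDual (f : g →ₗ[k] g) (a : TensorAlgebra k g) : (liftDerivDual f a).fst = a := by
  have : (TrivSqZeroExt.fstHom k _ _).comp (liftDerivDual f) = AlgHom.id k _ := by
    ext x
    simp [liftDerivDual]
  exact AlgHom.congr_fun this a

noncomputable def liftDeriv (f : g →ₗ[k] g) : TensorAlgebra k g →ₗ[k] TensorAlgebra k g :=
  ((TrivSqZeroExt.sndHom _ _).restrictScalars k) ∘ₗ (liftDerivDual f).toLinearMap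

@[simp]
lemma liftDeriv_ι (f : g →ₗ[k] g) (x : g) : liftDeriv f (ι k x) = ι k (f x) := by
  simp [liftDeriv, liftDerivDual]

lemma liftDeriv_mul (f : g →ₗ[k] g) (a b : TensorAlgebra k g) :
    liftDeriv f (a * b) = liftDeriv f a * b + a * liftDeriv f b := by
  simp [liftDeriv, fst_liftDerivDual, add_comm]

@[simp]
lemma liftDeriv_one (f : g →ₗ[k] g) : liftDeriv f (1 : TensorAlgebra k g) = 0 := by
  simp [liftDeriv]

end TensorAlgebra

open TensorAlgebra

section PureTensors

variable {k : Type*} [CommRing k] {g : Type*} [AddCommMonoid g] [Module k g]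

@[simp]
lemma pt_fin_zero (x : Fin 0 → g) : pt k x = 1 := by
  simp [pt]

lemma pt_fin_one (x : Fin 1 → g) : pt k x = ι k (x 0) := by
  simp [pt]

lemma pt_snoc {m : ℕ} (x : Fin m → g) (y : g) : pt k (Fin.snoc x y) = pt k x * ι k y := by
  simp only [pt, List.ofFn_succ']
  simp [List.concat_eq_append]

lemma pt_append {m n : ℕ} (x : Fin m → g) (y : Fin n → g) :
    pt k (Fin.append x y) = pt k x * pt k y := by
  simp [pt, List.ofFn_add]

lemma span_pt_eq_top :
    Submodule.span k {z : TensorAlgebra k g | ∃ (m : ℕ) (x : Fin m → g), z = pt k x} = ⊤ := by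
  rw [eq_top_iff, ← Algebra.top_toSubmodule, ← adjoin_range_ι, Algebra.adjoin_eq_span]
  refine Submodule.span_mono fun z hz => ?_
  induction hz using Submonoid.closure_induction with
  | mem _ h =>
    obtain ⟨v, rfl⟩ := h
    exact ⟨1, fun _ => v, by rw [pt_fin_one]⟩
  | one => exact ⟨0, Fin.elim0, (pt_fin_zero _).symm⟩
  | mul _ _ _ _ hx hy =>
    obtain ⟨m, x, rfl⟩ := hx
    obtain ⟨n, y, rfl⟩ := hy
    exact ⟨m + n, Fin.append x y, (pt_append x y).symm⟩

lemma involute_pt {m : ℕ} (x : Fin m → g) : involute (pt k x) = (-1 : k) ^ m • pt k x := by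
  induction m with
  | zero => simp
  | succ m ih =>
    rw [← Fin.snoc_init_self x, pt_snoc, map_mul, ih, involute_ι, pow_succ]
    simp

lemma liftDeriv_pt (f : g →ₗ[k] g) {m : ℕ} (x : Fin m → g) :
    liftDeriv f (pt k x) = ∑ i, pt k (Function.update x i (f (x i))) := by
  induction m with
  | zero => simp
  | succ m ih =>
    conv_lhs => rw [← Fin.snoc_init_self x]
    conv_rhs => rw [← Fin.snoc_init_self x]
    rw [pt_snoc, liftDeriv_mul, ih, liftDeriv_ι, Fin.sum_univ_castSucc, Finset.sum_mul]
    simp only [Fin.snoc_castSucc, Fin.snoc_last, ← Fin.snoc_update, Fin.update_snoc_last, pt_snoc]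

end PureTensors

namespace LeibnizComplex

section LeibnizDifferential

variable {k : Type*} [CommRing k] {g : Type*} [AddCommMonoid g] [Module k g]
  (mul : g →ₗ[k] g →ₗ[k] g) {D : TensorAlgebra k g →ₗ[k] TensorAlgebra k g}
  (hD : ∀ (m : ℕ) (x : Fin (m + 1) → g),
    D (pt k x) = ∑ j : Fin (m + 1),
      ∑ i ∈ Finset.univ.filter (fun i : Fin m => i.castSucc < j),
        ((-1 : k) ^ (j : ℕ)) •
          pt k (Function.update (fun a : Fin m => x (j.succAbove a)) i
            (mul (x i.castSucc) (x j))))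
  (hD0 : D 1 = 0)

include hD hD0

lemma D_pt_mul_ι {m : ℕ} (x : Fin m → g) (y : g) :
    D (pt k x * ι k y) =
      D (pt k x) * ι k y + (-1 : k) ^ m • ∑ i, pt k (Function.update x i (mul (x i) y)) := by
  cases m with
  | zero => simpa [hD0, pt_fin_one] using hD 0 fun _ => y
  | succ m =>
    rw [← pt_snoc, hD (m + 1) (Fin.snoc x y), hD m x, Fin.sum_univ_castSucc, Finset.sum_mul]
    -- the terms with `j` the last index make up the second summand, the others the first
    congr 1
    · refine Finset.sum_congr rfl fun j _ => ?_
      rw [Finset.sum_filter, Finset.sum_filter, Finset.sum_mul, Fin.sum_univ_castSucc,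
        if_neg (by simpa using (Fin.le_last j).not_gt), add_zero]
      refine Finset.sum_congr rfl fun i _ => ?_
      simp only [Fin.castSucc_lt_castSucc_iff]
      split_ifs
      · rw [Fin.snoc_comp_castSucc_succAbove, Fin.snoc_castSucc, Fin.snoc_castSucc,
          ← Fin.snoc_update, pt_snoc, Fin.val_castSucc, smul_mul_assoc]
      · rw [zero_mul]
    · rw [Finset.smul_sum, Finset.sum_filter]
      refine Finset.sum_congr rfl fun i _ => ?_
      simp [Fin.castSucc_lt_last, Fin.succAbove_last]

lemma D_mul_ι (a : TensorAlgebra k g) (y : g) :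
    D (a * ι k y) = D a * ι k y + liftDeriv (mul.flip y) (involute a) := by
  have : D ∘ₗ LinearMap.mulRight k (ι k y) =
      LinearMap.mulRight k (ι k y) ∘ₗ D + liftDeriv (mul.flip y) ∘ₗ involute.toLinearMap := by
    refine LinearMap.ext_on span_pt_eq_top ?_
    rintro _ ⟨m, x, rfl⟩
    simp [D_pt_mul_ι mul hD hD0, involute_pt, liftDeriv_pt]
  exact LinearMap.congr_fun this a

end LeibnizDifferential

section Filtration

variable {k : Type*} [CommRing k] {g : Type*} [AddCommMonoid g] [Module k g]
  {L : ℕ → Submodule k (TensorAlgebra k g)} (hL1 : L 1 = tensorGrade k g 1)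
  (hLsucc : ∀ n : ℕ, 1 ≤ n → L (n + 1) =
    Submodule.span k {z | ∃ X ∈ L n, ∃ y : g,
      z = X * TensorAlgebra.ι k y - ((-1 : k) ^ n) • (TensorAlgebra.ι k y * X)})
  {F : ℕ → Submodule k (TensorAlgebra k g)}
  (hF0 : F 0 = Submodule.span k {(1 : TensorAlgebra k g)})
  (hFsucc : ∀ n : ℕ, F (n + 1) = F n ⊔
    Submodule.span k {z | ∃ X ∈ F n, ∃ t : ℕ, 1 ≤ t ∧ ∃ Y ∈ L t, z = X * Y})
  {mul : g →ₗ[k] g →ₗ[k] g} {D : TensorAlgebra k g →ₗ[k] TensorAlgebra k g}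
  (hD1 : D 1 = 0)
  (hDι : ∀ a y, D (a * ι k y) = D a * ι k y + liftDeriv (mul.flip y) (involute a))

include hL1 in
lemma L_one_eq_range : L 1 = LinearMap.range (ι k) := by
  have : {z | ∃ x : Fin 1 → g, z = pt k x} = Set.range (ι k) := by
    ext z
    simp only [Set.mem_ofPred_eq, pt_fin_one, Set.mem_range]
    exact ⟨fun ⟨x, hx⟩ => ⟨x 0, hx.symm⟩, fun ⟨v, hv⟩ => ⟨fun _ => v, hv.symm⟩⟩
  rw [hL1, tensorGrade, this, ← LinearMap.coe_range, Submodule.span_eq]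

include hLsucc in
lemma mul_ι_sub_mem_L {n : ℕ} (hn : 1 ≤ n) {X : TensorAlgebra k g} (hX : X ∈ L n) (y : g) :
    X * ι k y - (-1 : k) ^ n • (ι k y * X) ∈ L (n + 1) := by
  rw [hLsucc n hn]
  exact Submodule.subset_span ⟨X, hX, y, rfl⟩

include hLsucc in
lemma L_succ_le {n : ℕ} (hn : 1 ≤ n) {P : Submodule k (TensorAlgebra k g)}
    (h : ∀ X ∈ L n, ∀ y : g, X * ι k y - (-1 : k) ^ n • (ι k y * X) ∈ P) : L (n + 1) ≤ P := by
  rw [hLsucc n hn, Submodule.span_le]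
  rintro _ ⟨X, hX, y, rfl⟩
  exact h X hX y

include hL1 hLsucc in
lemma involute_of_mem_L {n : ℕ} (hn : 1 ≤ n) {X : TensorAlgebra k g} (hX : X ∈ L n) :
    involute X = (-1 : k) ^ n • X := by
  induction n, hn using Nat.le_induction generalizing X with
  | base =>
    rw [L_one_eq_range hL1] at hX
    obtain ⟨v, rfl⟩ := hX
    simp
  | succ n hn ih =>
    refine L_succ_le hLsucc hn (P := LinearMap.eqLocus involute.toLinearMap
      ((-1 : k) ^ (n + 1) • LinearMap.id)) (fun X hX y => ?_) hX
    simp only [LinearMap.mem_eqLocus, AlgHom.toLinearMap_apply, map_sub, map_smul, map_mul,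
      involute_ι, ih hX, LinearMap.smul_apply, LinearMap.id_apply]
    simp only [smul_mul_assoc, mul_smul_comm, mul_neg, neg_mul, pow_succ]
    module

include hL1 hLsucc in
lemma liftDeriv_mem_L (f : g →ₗ[k] g) {n : ℕ} (hn : 1 ≤ n) {X : TensorAlgebra k g}
    (hX : X ∈ L n) : liftDeriv f X ∈ L n := by
  induction n, hn using Nat.le_induction generalizing X with
  | base =>
    rw [L_one_eq_range hL1] at hX ⊢
    obtain ⟨v, rfl⟩ := hX
    simp
  | succ n hn ih =>
    refine L_succ_le hLsucc hn (P := (L (n + 1)).comap (liftDeriv f)) (fun X hX y => ?_) hX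
    have : liftDeriv f (X * ι k y - (-1 : k) ^ n • (ι k y * X)) =
        (liftDeriv f X * ι k y - (-1 : k) ^ n • (ι k y * liftDeriv f X)) +
          (X * ι k (f y) - (-1 : k) ^ n • (ι k (f y) * X)) := by
      simp only [map_sub, map_smul, liftDeriv_mul, liftDeriv_ι]
      module
    rw [Submodule.mem_comap, this]
    exact add_mem (mul_ι_sub_mem_L hLsucc hn (ih hX) y) (mul_ι_sub_mem_L hLsucc hn hX (f y))

include hD1 hDι in
lemma D_ι (v : g) : D (ι k v) = 0 := by
  simpa [hD1] using hDι 1 v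

include hD1 hDι hL1 hLsucc in
lemma D_mul_of_mem_L {n : ℕ} {Y : TensorAlgebra k g} (hY : Y ∈ L (n + 2))
    (X : TensorAlgebra k g) : D (X * Y) = D X * Y + involute X * D Y := by
  let P := ⨅ X, LinearMap.eqLocus (D ∘ₗ LinearMap.mulLeft k X)
    (LinearMap.mulLeft k (D X) + LinearMap.mulLeft k (involute X) ∘ₗ D)
  have hP (Y) : Y ∈ P ↔ ∀ X, D (X * Y) = D X * Y + involute X * D Y := by simp [P]
  suffices ∀ n, L (n + 2) ≤ P from (hP Y).1 (this n hY) X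
  intro n
  induction n with
  | zero =>
    refine L_succ_le hLsucc le_rfl fun X' hX' y => (hP _).2 fun Z => ?_
    rw [L_one_eq_range hL1] at hX'
    obtain ⟨v, rfl⟩ := hX'
    simp only [pow_one, neg_smul, one_smul, sub_neg_eq_add, mul_add, ← mul_assoc, map_add, hDι,
      add_mul, map_mul, involute_ι, mul_neg, map_neg, liftDeriv_mul, liftDeriv_ι,
      LinearMap.flip_apply, neg_add_rev, D_ι hD1 hDι, zero_mul, zero_add]
    module
  | succ n ih =>
    refine L_succ_le hLsucc (by omega) fun Y' hY' y => (hP _).2 fun Z => ?_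
    have hY'mul := (hP Y').1 (ih hY')
    simp only [mul_sub, ← mul_assoc, Algebra.mul_smul_comm, map_sub, hDι, hY'mul, add_mul, map_mul,
      involute_of_mem_L hL1 hLsucc (by omega) hY', map_smul, liftDeriv_mul, smul_add, involute_ι,
      mul_neg, neg_mul, smul_neg, D_ι hD1 hDι, zero_mul, zero_add, sub_neg_eq_add, mul_add]
    module

include hD1 hDι hL1 hLsucc in
lemma D_mem_L {n : ℕ} {Y : TensorAlgebra k g} (hY : Y ∈ L (n + 2)) : D Y ∈ L (n + 1) := by
  induction n generalizing Y with
  | zero =>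
    refine L_succ_le hLsucc le_rfl (P := (L 1).comap D) (fun X hX y => ?_) hY
    rw [L_one_eq_range hL1] at hX
    obtain ⟨v, rfl⟩ := hX
    rw [Submodule.mem_comap, L_one_eq_range hL1]
    simp only [pow_one, neg_smul, one_smul, sub_neg_eq_add, map_add, hDι, D_ι hD1 hDι, zero_mul,
      involute_ι, map_neg, liftDeriv_ι, LinearMap.flip_apply, zero_add]
    exact add_mem (neg_mem (LinearMap.mem_range_self _ _)) (neg_mem (LinearMap.mem_range_self _ _))
  | succ n ih =>
    refine L_succ_le hLsucc (by omega) (P := (L (n + 2)).comap D) (fun Y' hY' y => ?_) hY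
    have : D (Y' * ι k y - (-1 : k) ^ (n + 2) • (ι k y * Y')) =
        (D Y' * ι k y - (-1 : k) ^ (n + 1) • (ι k y * D Y')) +
          (-1 : k) ^ (n + 2) • liftDeriv (mul.flip y) Y' := by
      simp only [pow_succ, mul_neg, mul_one, neg_neg, map_sub, hDι, map_smul,
        involute_of_mem_L hL1 hLsucc (by omega) hY', D_mul_of_mem_L hL1 hLsucc hD1 hDι hY',
        D_ι hD1 hDι, zero_mul, involute_ι, neg_mul, zero_add, smul_neg, sub_neg_eq_add, neg_smul]
      module
    rw [Submodule.mem_comap, this]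
    exact add_mem (mul_ι_sub_mem_L hLsucc (by omega) (ih hY') y)
      (Submodule.smul_mem _ _ (liftDeriv_mem_L hL1 hLsucc _ (by omega) hY'))

include hFsucc in
lemma F_le_succ (n : ℕ) : F n ≤ F (n + 1) := by
  rw [hFsucc n]
  exact le_sup_left

include hFsucc in
lemma mul_mem_F_succ {n t : ℕ} {X Y : TensorAlgebra k g} (hX : X ∈ F n) (ht : 1 ≤ t)
    (hY : Y ∈ L t) : X * Y ∈ F (n + 1) := by
  rw [hFsucc n]
  exact Submodule.mem_sup_right (Submodule.subset_span ⟨X, hX, t, ht, Y, hY, rfl⟩)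

include hF0 hFsucc in
lemma F_le_comap (φ : TensorAlgebra k g →ₗ[k] TensorAlgebra k g) (h1 : φ 1 ∈ F 0)
    (hstep : ∀ n, F n ≤ (F n).comap φ →
      ∀ X ∈ F n, ∀ t, 1 ≤ t → ∀ Y ∈ L t, φ (X * Y) ∈ F (n + 1))
    (n : ℕ) : F n ≤ (F n).comap φ := by
  induction n with
  | zero =>
    conv_lhs => rw [hF0]
    rwa [Submodule.span_le, Set.singleton_subset_iff]
  | succ n ih =>
    conv_lhs => rw [hFsucc n]
    refine sup_le (ih.trans (Submodule.comap_mono (F_le_succ hFsucc n))) ?_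
    rw [Submodule.span_le]
    rintro _ ⟨X, hX, t, ht, Y, hY, rfl⟩
    exact hstep n ih X hX t ht Y hY

include hF0 in
lemma one_mem_F_zero : (1 : TensorAlgebra k g) ∈ F 0 := by
  rw [hF0]
  exact Submodule.mem_span_singleton_self 1

include hL1 hLsucc hF0 hFsucc in
lemma involute_mem_F {n : ℕ} {X : TensorAlgebra k g} (hX : X ∈ F n) : involute X ∈ F n := by
  refine F_le_comap hF0 hFsucc involute.toLinearMap ?_ (fun n ih X hX t ht Y hY => ?_) n hX
  · simpa using one_mem_F_zero hF0
  · rw [AlgHom.toLinearMap_apply, map_mul, involute_of_mem_L hL1 hLsucc ht hY, mul_smul_comm]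
    exact Submodule.smul_mem _ _ (mul_mem_F_succ hFsucc (ih hX) ht hY)

include hL1 hLsucc hF0 hFsucc in
lemma liftDeriv_mem_F (f : g →ₗ[k] g) {n : ℕ} {X : TensorAlgebra k g} (hX : X ∈ F n) :
    liftDeriv f X ∈ F n := by
  refine F_le_comap hF0 hFsucc (liftDeriv f) (by simp) (fun n ih X hX t ht Y hY => ?_) n hX
  rw [liftDeriv_mul]
  exact add_mem (mul_mem_F_succ hFsucc (ih hX) ht hY)
    (mul_mem_F_succ hFsucc hX ht (liftDeriv_mem_L hL1 hLsucc f ht hY))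

include hD1 hDι hL1 hLsucc hF0 hFsucc in
lemma D_mem_F {n : ℕ} {X : TensorAlgebra k g} (hX : X ∈ F n) : D X ∈ F n := by
  refine F_le_comap hF0 hFsucc D (by simp [hD1]) (fun n ih X hX t ht Y hY => ?_) n hX
  rcases ht.eq_or_lt with rfl | ht2
  · rw [L_one_eq_range hL1] at hY
    obtain ⟨v, rfl⟩ := hY
    have hσX := involute_mem_F hL1 hLsucc hF0 hFsucc hX
    rw [hDι]
    exact add_mem (mul_mem_F_succ hFsucc (ih hX) le_rfl (by simp [L_one_eq_range hL1]))
      (F_le_succ hFsucc n (liftDeriv_mem_F hL1 hLsucc hF0 hFsucc _ hσX))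
  · obtain ⟨s, rfl⟩ := Nat.exists_eq_add_of_le' ht2
    rw [D_mul_of_mem_L hL1 hLsucc hD1 hDι hY]
    exact add_mem (mul_mem_F_succ hFsucc (ih hX) ht hY)
      (mul_mem_F_succ hFsucc (involute_mem_F hL1 hLsucc hF0 hFsucc hX) (by omega)
        (D_mem_L hL1 hLsucc hD1 hDι hY))

include hL1 hF0 hFsucc in
lemma pt_mem_F {m : ℕ} (x : Fin m → g) : pt k x ∈ F m := by
  induction m with
  | zero => simpa using one_mem_F_zero hF0
  | succ m ih =>
    rw [← Fin.snoc_init_self x, pt_snoc]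
    exact mul_mem_F_succ hFsucc (ih _) le_rfl (by simp [L_one_eq_range hL1])

include hL1 hF0 hFsucc in
lemma iSup_F_eq_top : ⨆ n, F n = ⊤ := by
  rw [eq_top_iff, ← span_pt_eq_top, Submodule.span_le]
  rintro _ ⟨m, x, rfl⟩
  exact Submodule.mem_iSup_of_mem m (pt_mem_F hL1 hF0 hFsucc x)

end Filtration

end LeibnizComplex

theorem loday_conjecture_primitive_filtration_stable_general
    {k : Type*} [Field k]
    {g : Type*} [AddCommGroup g] [Module k g]
    (mul : g →ₗ[k] g →ₗ[k] g)
    (D : TensorAlgebra k g →ₗ[k] TensorAlgebra k g)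
    (hD : ∀ (m : ℕ) (x : Fin (m + 1) → g),
      D (pt k x) = ∑ j : Fin (m + 1),
        ∑ i ∈ Finset.univ.filter (fun i : Fin m => i.castSucc < j),
          ((-1 : k) ^ (j : ℕ)) •
            pt k (Function.update (fun a : Fin m => x (j.succAbove a)) i
              (mul (x i.castSucc) (x j))))
    (L : ℕ → Submodule k (TensorAlgebra k g))
    (hL1 : L 1 = tensorGrade k g 1)
    (hLsucc : ∀ n : ℕ, 1 ≤ n → L (n + 1) =
      Submodule.span k {z | ∃ X ∈ L n, ∃ y : g,
        z = X * TensorAlgebra.ι k y - ((-1 : k) ^ n) • (TensorAlgebra.ι k y * X)})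
    (hD0 : D (1 : TensorAlgebra k g) = 0)
    (F : ℕ → Submodule k (TensorAlgebra k g))
    (hF0 : F 0 = Submodule.span k {(1 : TensorAlgebra k g)})
    (hFsucc : ∀ n : ℕ, F (n + 1) = F n ⊔
      Submodule.span k {z | ∃ X ∈ F n, ∃ t : ℕ, 1 ≤ t ∧ ∃ Y ∈ L t, z = X * Y}) :
    (∀ n : ℕ, ∀ Z ∈ F n, D Z ∈ F n) ∧
    (∀ n : ℕ, F n ≤ F (n + 1)) ∧
    (⨆ n : ℕ, F n) = ⊤ :=
  ⟨fun _ _ hZ => LeibnizComplex.D_mem_F hL1 hLsucc hF0 hFsucc hD0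
      (LeibnizComplex.D_mul_ι mul hD hD0) hZ,
    LeibnizComplex.F_le_succ hFsucc, LeibnizComplex.iSup_F_eq_top hL1 hF0 hFsucc⟩

/-- Loday's conjecture: for a (right) Leibniz algebra `g` over a field `k`
of characteristic zero, every stage `F n` of the primitive filtration of the tensor algebra
is stable under the total Leibniz differential `D` (here `hD0 : D 1 = 0` records the
convention on the degree-`0` part), and the `F n` form an increasing, exhaustive filtration
with `F 0 = k·1`.  Here `F 0 = span {1}` and
`F (n+1) = F n ⊔ span {X * Y | X ∈ F n, Y ∈ L t, t ≥ 1}`, which is the inductive form of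
"`F n` is spanned by `1` together with all products `X₁⊗…⊗X_j`, `1 ≤ j ≤ n`, `Xᵢ ∈ L_{mᵢ}`". -/
theorem loday_conjecture_primitive_filtration_stable
    {k : Type*} [Field k] [CharZero k]
    {g : Type*} [AddCommGroup g] [Module k g]
    (mul : g →ₗ[k] g →ₗ[k] g)
    (hleib : ∀ x y z : g, mul x (mul y z) = mul (mul x y) z - mul (mul x z) y)
    (D : TensorAlgebra k g →ₗ[k] TensorAlgebra k g)
    (hD : ∀ (m : ℕ) (x : Fin (m + 1) → g),
      D (pt k x) = ∑ j : Fin (m + 1),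
        ∑ i ∈ Finset.univ.filter (fun i : Fin m => i.castSucc < j),
          ((-1 : k) ^ (j : ℕ)) •
            pt k (Function.update (fun a : Fin m => x (j.succAbove a)) i
              (mul (x i.castSucc) (x j))))
    (L : ℕ → Submodule k (TensorAlgebra k g))
    (hL1 : L 1 = tensorGrade k g 1)
    (hLsucc : ∀ n : ℕ, 1 ≤ n → L (n + 1) =
      Submodule.span k {z | ∃ X ∈ L n, ∃ y : g,
        z = X * TensorAlgebra.ι k y - ((-1 : k) ^ n) • (TensorAlgebra.ι k y * X)})
    (hD0 : D (1 : TensorAlgebra k g) = 0)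
    (F : ℕ → Submodule k (TensorAlgebra k g))
    (hF0 : F 0 = Submodule.span k {(1 : TensorAlgebra k g)})
    (hFsucc : ∀ n : ℕ, F (n + 1) = F n ⊔
      Submodule.span k {z | ∃ X ∈ F n, ∃ t : ℕ, 1 ≤ t ∧ ∃ Y ∈ L t, z = X * Y}) :
    (∀ n : ℕ, ∀ Z ∈ F n, D Z ∈ F n) ∧
    (∀ n : ℕ, F n ≤ F (n + 1)) ∧
    (⨆ n : ℕ, F n) = ⊤ :=
  loday_conjecture_primitive_filtration_stable_general mul D hD L hL1 hLsucc hD0 F hF0 hFsucc
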